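/- arXiv:2501.15333 — 2 statements merged into one kernel-verified Lean document; each statement's English description precedes it below -/
import Mathlib

section
/- For all Z > 0, R > 0, ε ∈ (0,1) and 0 < k_min ≤ k_max there exists C₂ > 0, depending only on R, Z, k_min, k_max and ε, such that for every λ ≥ 0, every k ∈ [k_min, k_max], all twice continuously differentiable q, r : [0,Z] → ℝ whose values, first derivatives and second derivatives are bounded in absolute value by R, and all twice continuously differentiable h₁, h₂ : [0,Z] → ℝ whose values and first derivatives are bounded in absolute value by R, the first-order Taylor remainder of J_λ satisfies: | J_λ(q + h₁, r + h₂) − J_λ(q,r) − 2 ∫₀^Z [L₁(q,r)(z)·L₁,lin(h₁,h₂)(z) + L₂(q,r)(z)·L₂,lin(h₁,h₂)(z)] e^{−2λz} dz | ≤ C₂ ∫₀^Z (h₁'(z)² + h₁''(z)² + h₂'(z)² + h₂''(z)²) dz. (This expresses that the bounded linear functional (h₁,h₂) ↦ 2∫₀^Z [L₁·L₁,lin + L₂·L₂,lin] e^{−2λz} dz is the Fréchet derivative of J_λ at (q,r).) -/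
/-!
`L₁(q,r) = q'' + N(q',r')` and `L₂(q,r) = r'' + N(q',r')`, where `N = nonlin ε k` is a quadratic
polynomial whose coefficients are bounded uniformly in `k ∈ [k_min, k_max]`. Hence
`Lᵢ(q+h₁, r+h₂) = Lᵢ + (Lᵢ,lin + Q)` with `Q = nonlinQuad ε k h₁' h₂'` the quadratic part of `N`,
and the integrand of the Taylor remainder is
`(2(L₁ + L₂)Q + (L₁,lin + Q)² + (L₂,lin + Q)²) e^{-2λz}`.
On bounded data `Lᵢ` is bounded, `|Q| ≲ h₁'² + h₂'²`, and
`Lᵢ,lin + Q = hᵢ'' + (N(q'+h₁', r'+h₂') - N(q',r')) ≲ |hᵢ''| + |h₁'| + |h₂'|` since `N` is Lipschitz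
on bounded sets. As `e^{-2λz} ≤ 1`, the integrand is `≲ h₁'² + h₁''² + h₂'² + h₂''²` pointwise.
-/

/-- The nonlinear operator `L₁(q,r)` of equation (3.200). -/
noncomputable def L1 (ε k : ℝ) (q r : ℝ → ℝ) (z : ℝ) : ℝ :=
  deriv (deriv q) z + (2 * k / ε) * deriv q z * (deriv q z - deriv r z)
    + (1 / ε ^ 2) * (deriv q z - deriv r z) ^ 2
    - 2 * Real.sqrt k * deriv q z
    - (deriv q z - deriv r z) / (ε * Real.sqrt k)

/-- The nonlinear operator `L₂(q,r)` of equation (3.21). -/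
noncomputable def L2 (ε k : ℝ) (q r : ℝ → ℝ) (z : ℝ) : ℝ :=
  deriv (deriv r) z + (2 * k / ε) * deriv q z * (deriv q z - deriv r z)
    + (1 / ε ^ 2) * (deriv q z - deriv r z) ^ 2
    - 2 * Real.sqrt k * deriv q z
    - (deriv q z - deriv r z) / (ε * Real.sqrt k)

/-- The linearization of `L₁` at the base point `(q,r)`, applied to `(h₁,h₂)`. -/
noncomputable def L1lin (ε k : ℝ) (q r h₁ h₂ : ℝ → ℝ) (z : ℝ) : ℝ :=
  deriv (deriv h₁) z
    + (2 * k / ε) * deriv h₁ z * (deriv q z - deriv r z)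
    + (2 * k / ε) * deriv q z * (deriv h₁ z - deriv h₂ z)
    + (2 / ε ^ 2) * (deriv q z - deriv r z) * (deriv h₁ z - deriv h₂ z)
    - 2 * Real.sqrt k * deriv h₁ z
    - (deriv h₁ z - deriv h₂ z) / (ε * Real.sqrt k)

/-- The linearization of `L₂` at the base point `(q,r)`, applied to `(h₁,h₂)`. -/
noncomputable def L2lin (ε k : ℝ) (q r h₁ h₂ : ℝ → ℝ) (z : ℝ) : ℝ :=
  deriv (deriv h₂) z
    + (2 * k / ε) * deriv h₁ z * (deriv q z - deriv r z)
    + (2 * k / ε) * deriv q z * (deriv h₁ z - deriv h₂ z)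
    + (2 / ε ^ 2) * (deriv q z - deriv r z) * (deriv h₁ z - deriv h₂ z)
    - 2 * Real.sqrt k * deriv h₁ z
    - (deriv h₁ z - deriv h₂ z) / (ε * Real.sqrt k)

/-- The weighted Tikhonov-like functional `J_λ(q,r)` of (4.4) with the Carleman weight
`exp (-2 λ z)`. -/
noncomputable def Jfun (ε k lam Z : ℝ) (q r : ℝ → ℝ) : ℝ :=
  ∫ z in (0:ℝ)..Z, ((L1 ε k q r z) ^ 2 + (L2 ε k q r z) ^ 2) * Real.exp (-2 * lam * z)

open Real Set

lemma deriv_fun_add_eq {f g : ℝ → ℝ} (hf : Differentiable ℝ f) (hg : Differentiable ℝ g) :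
    deriv (fun z => f z + g z) = fun z => deriv f z + deriv g z :=
  funext fun _ => deriv_fun_add (hf _) (hg _)

lemma deriv_deriv_fun_add_eq {f g : ℝ → ℝ} (hf : ContDiff ℝ 2 f) (hg : ContDiff ℝ 2 g) :
    deriv (deriv (fun z => f z + g z)) = fun z => deriv (deriv f) z + deriv (deriv g) z := by
  rw [deriv_fun_add_eq (hf.differentiable two_ne_zero) (hg.differentiable two_ne_zero),
    deriv_fun_add_eq hf.differentiable_deriv_two hg.differentiable_deriv_two]

@[fun_prop]
lemma ContDiff.continuous_deriv_deriv {f : ℝ → ℝ} (hf : ContDiff ℝ 2 f) :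
    Continuous (deriv (deriv f)) :=
  (hf.deriv' (n := 1)).continuous_deriv_one

lemma abs_intervalIntegral_le_mul_integral {f g : ℝ → ℝ} {a b C : ℝ} (hab : a ≤ b)
    (hg : IntervalIntegrable g MeasureTheory.volume a b) (h : ∀ x ∈ Icc a b, |f x| ≤ C * g x) :
    |∫ x in a..b, f x| ≤ C * ∫ x in a..b, g x := by
  rw [← intervalIntegral.integral_const_mul]
  exact intervalIntegral.norm_integral_le_of_norm_le hab
    (MeasureTheory.ae_of_all _ fun x hx => (Real.norm_eq_abs _).trans_le
      (h x (Ioc_subset_Icc_self hx))) (hg.const_mul C)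

lemma abs_two_mul_add_sq_add_sq_le {a b A B Q e f s t M c c₂ : ℝ} (hc₂ : 0 ≤ c₂)
    (ha : |a| ≤ M) (hb : |b| ≤ M) (hA : |A| ≤ |e| + c * (|s| + |t|))
    (hB : |B| ≤ |f| + c * (|s| + |t|)) (hQ : |Q| ≤ c₂ * (s ^ 2 + t ^ 2)) :
    |2 * (a + b) * Q + A ^ 2 + B ^ 2|
      ≤ (4 * M * c₂ + 6 * c ^ 2 + 3) * (s ^ 2 + e ^ 2 + t ^ 2 + f ^ 2) := by
  have hM : 0 ≤ M := (abs_nonneg a).trans ha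
  have sq_le {X g : ℝ} (hX : |X| ≤ |g| + c * (|s| + |t|)) :
      X ^ 2 ≤ 3 * (g ^ 2 + c ^ 2 * s ^ 2 + c ^ 2 * t ^ 2) := by
    have h := pow_le_pow_left₀ (abs_nonneg X) hX 2
    rw [sq_abs] at h
    nlinarith [sq_nonneg (|g| - c * |s|), sq_nonneg (|g| - c * |t|),
      sq_nonneg (c * |s| - c * |t|), sq_abs g, sq_abs s, sq_abs t]
  have hcross : |2 * (a + b) * Q| ≤ 2 * (M + M) * (c₂ * (s ^ 2 + t ^ 2)) := by
    rw [abs_mul, abs_mul, abs_two]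
    gcongr
    exact (abs_add_le a b).trans (add_le_add ha hb)
  calc |2 * (a + b) * Q + A ^ 2 + B ^ 2| ≤ |2 * (a + b) * Q| + A ^ 2 + B ^ 2 := by
        refine (abs_add_three _ _ _).trans_eq ?_
        rw [abs_sq, abs_sq]
    _ ≤ (4 * M * c₂ + 6 * c ^ 2 + 3) * (s ^ 2 + e ^ 2 + t ^ 2 + f ^ 2) := by
        nlinarith [sq_le hA, sq_le hB, mul_nonneg (mul_nonneg hM hc₂) (sq_nonneg e),
          mul_nonneg (mul_nonneg hM hc₂) (sq_nonneg f), mul_nonneg (sq_nonneg c) (sq_nonneg e),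
          mul_nonneg (sq_nonneg c) (sq_nonneg f), sq_nonneg s, sq_nonneg t]

noncomputable def nonlin (ε k x y : ℝ) : ℝ :=
  2 * k / ε * x * (x - y) + 1 / ε ^ 2 * (x - y) ^ 2 - 2 * √k * x - (x - y) / (ε * √k)

noncomputable def nonlinQuad (ε k s t : ℝ) : ℝ :=
  2 * k / ε * s * (s - t) + 1 / ε ^ 2 * (s - t) ^ 2

section Bounds

variable {ε kmin kmax R : ℝ}

lemma exists_abs_nonlin_le (hε : 0 < ε) (hkmin : 0 < kmin) (hkk : kmin ≤ kmax) (hR : 0 ≤ R) :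
    ∃ M, 0 ≤ M ∧ ∀ k ∈ Icc kmin kmax, ∀ x y, |x| ≤ R → |y| ≤ R → |nonlin ε k x y| ≤ M := by
  have hkx : 0 ≤ kmax := hkmin.le.trans hkk
  refine ⟨2 * kmax / ε * R * (R + R) + 1 / ε ^ 2 * (R + R) ^ 2 + 2 * √kmax * R
    + (R + R) / (ε * √kmin), by positivity, fun k ⟨hk₁, hk₂⟩ x y hx hy => ?_⟩
  have hxy : |x - y| ≤ R + R := (abs_sub _ _).trans (add_le_add hx hy)
  have hk : 0 ≤ k := hkmin.le.trans hk₁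
  have : 0 < √kmin := sqrt_pos.2 hkmin
  have : √kmin ≤ √k := sqrt_le_sqrt hk₁
  have : √k ≤ √kmax := sqrt_le_sqrt hk₂
  unfold nonlin
  refine (abs_sub _ _).trans (add_le_add ((abs_sub _ _).trans (add_le_add
    ((abs_add_le _ _).trans (add_le_add ?_ ?_)) ?_)) ?_) <;>
  simp only [abs_mul, abs_div, abs_pow, abs_of_pos hε, abs_two, abs_one, abs_of_nonneg hk,
    abs_of_nonneg (sqrt_nonneg k)] <;>
  bound

lemma exists_abs_nonlin_add_sub_le (hε : 0 < ε) (hkmin : 0 < kmin) :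
    ∃ c, ∀ k ∈ Icc kmin kmax, ∀ x y s t, |x| ≤ R → |y| ≤ R → |s| ≤ R → |t| ≤ R →
      |nonlin ε k (x + s) (y + t) - nonlin ε k x y| ≤ c * (|s| + |t|) := by
  refine ⟨2 * kmax / ε * R + 2 * kmax / ε * (R + R + (R + R))
    + 1 / ε ^ 2 * (2 * (R + R) + (R + R)) + 2 * √kmax + 1 / (ε * √kmin),
    fun k ⟨hk₁, hk₂⟩ x y s t hx hy hs ht => ?_⟩
  have hk : 0 ≤ k := hkmin.le.trans hk₁
  have : 0 < √kmin := sqrt_pos.2 hkmin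
  have : √kmin ≤ √k := sqrt_le_sqrt hk₁
  have : √k ≤ √kmax := sqrt_le_sqrt hk₂
  have hxy : |x - y| ≤ R + R := (abs_sub _ _).trans (add_le_add hx hy)
  have hst : |s - t| ≤ R + R := (abs_sub _ _).trans (add_le_add hs ht)
  have hst' : |s - t| ≤ |s| + |t| := abs_sub _ _
  have hs' : |s| ≤ |s| + |t| := le_add_of_nonneg_right (abs_nonneg t)
  have hsum : |x - y + (s - t)| ≤ R + R + (R + R) := (abs_add_le _ _).trans (add_le_add hxy hst)
  have hsum2 : |2 * (x - y) + (s - t)| ≤ 2 * (R + R) + (R + R) := by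
    refine (abs_add_le _ _).trans (add_le_add ?_ hst); rw [abs_mul, abs_two]; linarith
  have expand : nonlin ε k (x + s) (y + t) - nonlin ε k x y
      = 2 * k / ε * x * (s - t) + 2 * k / ε * s * (x - y + (s - t))
        + 1 / ε ^ 2 * (s - t) * (2 * (x - y) + (s - t)) - 2 * √k * s - (s - t) / (ε * √k) := by
    unfold nonlin; ring
  rw [expand]
  set σ := |s| + |t|
  calc _ ≤ 2 * kmax / ε * R * σ + 2 * kmax / ε * σ * (R + R + (R + R))
        + 1 / ε ^ 2 * σ * (2 * (R + R) + (R + R)) + 2 * √kmax * σ + σ / (ε * √kmin) := by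
        refine (abs_sub _ _).trans (add_le_add ((abs_sub _ _).trans (add_le_add
          ((abs_add_le _ _).trans (add_le_add ((abs_add_le _ _).trans (add_le_add ?_ ?_)) ?_))
            ?_)) ?_) <;>
        simp only [abs_mul, abs_div, abs_pow, abs_of_pos hε, abs_two, abs_one, abs_of_nonneg hk,
          abs_of_nonneg (sqrt_nonneg k)] <;>
        bound
    _ = _ := by ring

lemma exists_abs_nonlinQuad_le (hε : 0 < ε) (hkmin : 0 < kmin) (hkk : kmin ≤ kmax) :
    ∃ c₂, 0 ≤ c₂ ∧ ∀ k ∈ Icc kmin kmax, ∀ s t, |nonlinQuad ε k s t| ≤ c₂ * (s ^ 2 + t ^ 2) := by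
  have hkx : 0 ≤ kmax := hkmin.le.trans hkk
  refine ⟨4 * kmax / ε + 2 / ε ^ 2, by positivity, fun k ⟨hk₁, hk₂⟩ s t => ?_⟩
  have hk : 0 ≤ k := hkmin.le.trans hk₁
  have hmul : |s * (s - t)| ≤ 2 * (s ^ 2 + t ^ 2) := by
    rw [abs_le]; constructor <;> nlinarith [sq_nonneg (s + t), sq_nonneg (s - t)]
  have hsq : (s - t) ^ 2 ≤ 2 * (s ^ 2 + t ^ 2) := by nlinarith [sq_nonneg (s + t)]
  calc |nonlinQuad ε k s t| ≤ 2 * k / ε * |s * (s - t)| + 1 / ε ^ 2 * (s - t) ^ 2 := by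
        refine (abs_add_le _ _).trans_eq ?_
        rw [mul_assoc, abs_mul, abs_of_nonneg (by positivity : 0 ≤ 2 * k / ε),
          abs_of_nonneg (by positivity : 0 ≤ 1 / ε ^ 2 * (s - t) ^ 2)]
    _ ≤ 2 * kmax / ε * (2 * (s ^ 2 + t ^ 2)) + 1 / ε ^ 2 * (2 * (s ^ 2 + t ^ 2)) := by gcongr
    _ = _ := by ring

end Bounds

section Operators

variable {ε k : ℝ} {q r h₁ h₂ : ℝ → ℝ} {z : ℝ}

lemma L1_eq : L1 ε k q r z = deriv (deriv q) z + nonlin ε k (deriv q z) (deriv r z) := by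
  rw [L1, nonlin]; ring

lemma L2_eq : L2 ε k q r z = deriv (deriv r) z + nonlin ε k (deriv q z) (deriv r z) := by
  rw [L2, nonlin]; ring

lemma L1lin_add_nonlinQuad :
    L1lin ε k q r h₁ h₂ z + nonlinQuad ε k (deriv h₁ z) (deriv h₂ z)
      = deriv (deriv h₁) z + (nonlin ε k (deriv q z + deriv h₁ z) (deriv r z + deriv h₂ z)
        - nonlin ε k (deriv q z) (deriv r z)) := by
  rw [L1lin, nonlinQuad, nonlin, nonlin]; ring

lemma L2lin_add_nonlinQuad :
    L2lin ε k q r h₁ h₂ z + nonlinQuad ε k (deriv h₁ z) (deriv h₂ z)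
      = deriv (deriv h₂) z + (nonlin ε k (deriv q z + deriv h₁ z) (deriv r z + deriv h₂ z)
        - nonlin ε k (deriv q z) (deriv r z)) := by
  rw [L2lin, nonlinQuad, nonlin, nonlin]; ring

lemma L1_add (hq : ContDiff ℝ 2 q) (hr : ContDiff ℝ 2 r) (hh₁ : ContDiff ℝ 2 h₁)
    (hh₂ : ContDiff ℝ 2 h₂) :
    L1 ε k (fun z => q z + h₁ z) (fun z => r z + h₂ z) z
      = L1 ε k q r z + (L1lin ε k q r h₁ h₂ z + nonlinQuad ε k (deriv h₁ z) (deriv h₂ z)) := by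
  rw [L1lin_add_nonlinQuad, L1_eq, L1_eq, deriv_deriv_fun_add_eq hq hh₁,
    deriv_fun_add_eq (hq.differentiable two_ne_zero) (hh₁.differentiable two_ne_zero),
    deriv_fun_add_eq (hr.differentiable two_ne_zero) (hh₂.differentiable two_ne_zero)]
  ring

lemma L2_add (hq : ContDiff ℝ 2 q) (hr : ContDiff ℝ 2 r) (hh₁ : ContDiff ℝ 2 h₁)
    (hh₂ : ContDiff ℝ 2 h₂) :
    L2 ε k (fun z => q z + h₁ z) (fun z => r z + h₂ z) z
      = L2 ε k q r z + (L2lin ε k q r h₁ h₂ z + nonlinQuad ε k (deriv h₁ z) (deriv h₂ z)) := by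
  rw [L2lin_add_nonlinQuad, L2_eq, L2_eq, deriv_deriv_fun_add_eq hr hh₂,
    deriv_fun_add_eq (hq.differentiable two_ne_zero) (hh₁.differentiable two_ne_zero),
    deriv_fun_add_eq (hr.differentiable two_ne_zero) (hh₂.differentiable two_ne_zero)]
  ring

lemma continuous_L1 (hq : ContDiff ℝ 2 q) (hr : ContDiff ℝ 1 r) : Continuous (L1 ε k q r) := by
  have := hq.continuous_deriv one_le_two
  unfold L1; fun_prop

lemma continuous_L2 (hq : ContDiff ℝ 1 q) (hr : ContDiff ℝ 2 r) : Continuous (L2 ε k q r) := by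
  have := hr.continuous_deriv one_le_two
  unfold L2; fun_prop

lemma continuous_L1lin (hq : ContDiff ℝ 1 q) (hr : ContDiff ℝ 1 r) (hh₁ : ContDiff ℝ 2 h₁)
    (hh₂ : ContDiff ℝ 1 h₂) : Continuous (L1lin ε k q r h₁ h₂) := by
  have := hh₁.continuous_deriv one_le_two
  unfold L1lin; fun_prop

lemma continuous_L2lin (hq : ContDiff ℝ 1 q) (hr : ContDiff ℝ 1 r) (hh₁ : ContDiff ℝ 1 h₁)
    (hh₂ : ContDiff ℝ 2 h₂) : Continuous (L2lin ε k q r h₁ h₂) := by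
  have := hh₂.continuous_deriv one_le_two
  unfold L2lin; fun_prop

end Operators

lemma exists_abs_remainder_integrand_le {ε kmin kmax R : ℝ} (hε : 0 < ε) (hkmin : 0 < kmin)
    (hkk : kmin ≤ kmax) (hR : 0 ≤ R) :
    ∃ C, 0 < C ∧ ∀ k ∈ Icc kmin kmax, ∀ (q r h₁ h₂ : ℝ → ℝ) (z : ℝ),
      |deriv q z| ≤ R → |deriv (deriv q) z| ≤ R → |deriv r z| ≤ R → |deriv (deriv r) z| ≤ R →
      |deriv h₁ z| ≤ R → |deriv h₂ z| ≤ R →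
      |2 * (L1 ε k q r z + L2 ε k q r z) * nonlinQuad ε k (deriv h₁ z) (deriv h₂ z)
          + (L1lin ε k q r h₁ h₂ z + nonlinQuad ε k (deriv h₁ z) (deriv h₂ z)) ^ 2
          + (L2lin ε k q r h₁ h₂ z + nonlinQuad ε k (deriv h₁ z) (deriv h₂ z)) ^ 2|
        ≤ C * (deriv h₁ z ^ 2 + deriv (deriv h₁) z ^ 2 + deriv h₂ z ^ 2
          + deriv (deriv h₂) z ^ 2) := by
  obtain ⟨M, hM, hnonlin⟩ := exists_abs_nonlin_le hε hkmin hkk hR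
  obtain ⟨c, hlip⟩ := exists_abs_nonlin_add_sub_le (kmax := kmax) (R := R) hε hkmin
  obtain ⟨c₂, hc₂, hquad⟩ := exists_abs_nonlinQuad_le hε hkmin hkk
  refine ⟨4 * (R + M) * c₂ + 6 * c ^ 2 + 3, by positivity,
    fun k hk q r h₁ h₂ z hq' hq'' hr' hr'' hh₁ hh₂ => ?_⟩
  have hN := hnonlin k hk _ _ hq' hr'
  have hΔ := hlip k hk _ _ _ _ hq' hr' hh₁ hh₂
  refine abs_two_mul_add_sq_add_sq_le hc₂ ?_ ?_ ?_ ?_ (hquad k hk _ _)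
  · rw [L1_eq]; exact (abs_add_le _ _).trans (add_le_add hq'' hN)
  · rw [L2_eq]; exact (abs_add_le _ _).trans (add_le_add hr'' hN)
  · rw [L1lin_add_nonlinQuad]; exact (abs_add_le _ _).trans (add_le_add_right hΔ _)
  · rw [L2lin_add_nonlinQuad]; exact (abs_add_le _ _).trans (add_le_add_right hΔ _)

lemma Jfun_add_sub_sub_eq_integral {ε k lam Z : ℝ} {q r h₁ h₂ : ℝ → ℝ} (hq : ContDiff ℝ 2 q)
    (hr : ContDiff ℝ 2 r) (hh₁ : ContDiff ℝ 2 h₁) (hh₂ : ContDiff ℝ 2 h₂) :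
    Jfun ε k lam Z (fun z => q z + h₁ z) (fun z => r z + h₂ z) - Jfun ε k lam Z q r
        - 2 * ∫ z in (0:ℝ)..Z, (L1 ε k q r z * L1lin ε k q r h₁ h₂ z
          + L2 ε k q r z * L2lin ε k q r h₁ h₂ z) * Real.exp (-2 * lam * z)
      = ∫ z in (0:ℝ)..Z,
          (2 * (L1 ε k q r z + L2 ε k q r z) * nonlinQuad ε k (deriv h₁ z) (deriv h₂ z)
            + (L1lin ε k q r h₁ h₂ z + nonlinQuad ε k (deriv h₁ z) (deriv h₂ z)) ^ 2
            + (L2lin ε k q r h₁ h₂ z + nonlinQuad ε k (deriv h₁ z) (deriv h₂ z)) ^ 2)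
          * Real.exp (-2 * lam * z) := by
  have hq₁ := hq.of_le one_le_two
  have hr₁ := hr.of_le one_le_two
  have hh₁₁ := hh₁.of_le one_le_two
  have hh₂₁ := hh₂.of_le one_le_two
  have := continuous_L1 (ε := ε) (k := k) hq hr₁
  have := continuous_L2 (ε := ε) (k := k) hq₁ hr
  have := continuous_L1lin (ε := ε) (k := k) hq₁ hr₁ hh₁ hh₂₁
  have := continuous_L2lin (ε := ε) (k := k) hq₁ hr₁ hh₁₁ hh₂
  have hquad : Continuous fun z => nonlinQuad ε k (deriv h₁ z) (deriv h₂ z) := by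
    unfold nonlinQuad; fun_prop
  have hJ : Jfun ε k lam Z (fun z => q z + h₁ z) (fun z => r z + h₂ z)
      = ∫ z in (0:ℝ)..Z,
          ((L1 ε k q r z + (L1lin ε k q r h₁ h₂ z
              + nonlinQuad ε k (deriv h₁ z) (deriv h₂ z))) ^ 2
            + (L2 ε k q r z + (L2lin ε k q r h₁ h₂ z
              + nonlinQuad ε k (deriv h₁ z) (deriv h₂ z))) ^ 2) * Real.exp (-2 * lam * z) :=
    intervalIntegral.integral_congr fun z _ => by
      simp only [L1_add hq hr hh₁ hh₂, L2_add hq hr hh₁ hh₂]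
  rw [hJ, Jfun, ← intervalIntegral.integral_const_mul, ← intervalIntegral.integral_sub,
    ← intervalIntegral.integral_sub]
  · exact intervalIntegral.integral_congr fun z _ => by ring
  all_goals exact Continuous.intervalIntegrable (by fun_prop) _ _

/-- Bound on the first-order Taylor remainder of `J_λ`: the bounded linear functional
`(h₁,h₂) ↦ 2∫₀^Z (L₁·L₁,lin + L₂·L₂,lin) e^{-2λz} dz` is the Fréchet derivative of `J_λ`
at `(q,r)` (item 1 of Theorem 5.1). -/
theorem frechet_remainder_bound_of_J (Z R ε kmin kmax : ℝ) (hZ : 0 < Z) (hR : 0 < R)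
    (hε : ε ∈ Set.Ioo (0:ℝ) 1) (hkmin : 0 < kmin) (hkk : kmin ≤ kmax) :
    ∃ C₂ : ℝ, 0 < C₂ ∧
      ∀ lam : ℝ, 0 ≤ lam → ∀ k ∈ Set.Icc kmin kmax,
      ∀ q r h₁ h₂ : ℝ → ℝ,
      ContDiff ℝ 2 q → ContDiff ℝ 2 r → ContDiff ℝ 2 h₁ → ContDiff ℝ 2 h₂ →
      (∀ z ∈ Set.Icc (0:ℝ) Z,
        |q z| ≤ R ∧ |deriv q z| ≤ R ∧ |deriv (deriv q) z| ≤ R ∧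
        |r z| ≤ R ∧ |deriv r z| ≤ R ∧ |deriv (deriv r) z| ≤ R) →
      (∀ z ∈ Set.Icc (0:ℝ) Z,
        |h₁ z| ≤ R ∧ |deriv h₁ z| ≤ R ∧ |h₂ z| ≤ R ∧ |deriv h₂ z| ≤ R) →
      |Jfun ε k lam Z (fun z => q z + h₁ z) (fun z => r z + h₂ z)
          - Jfun ε k lam Z q r
          - 2 * ∫ z in (0:ℝ)..Z,
              (L1 ε k q r z * L1lin ε k q r h₁ h₂ z
                + L2 ε k q r z * L2lin ε k q r h₁ h₂ z) * Real.exp (-2 * lam * z)|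
        ≤ C₂ * ∫ z in (0:ℝ)..Z,
            ((deriv h₁ z) ^ 2 + (deriv (deriv h₁) z) ^ 2
              + (deriv h₂ z) ^ 2 + (deriv (deriv h₂) z) ^ 2) := by
  obtain ⟨C, hC, hbound⟩ := exists_abs_remainder_integrand_le hε.1 hkmin hkk hR.le
  refine ⟨C, hC, fun lam hlam k hk q r h₁ h₂ hq hr hh₁ hh₂ hqr hh => ?_⟩
  rw [Jfun_add_sub_sub_eq_integral hq hr hh₁ hh₂]
  have := hh₁.continuous_deriv one_le_two
  have := hh₂.continuous_deriv one_le_two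
  refine abs_intervalIntegral_le_mul_integral hZ.le
    (Continuous.intervalIntegrable (by fun_prop) _ _) fun z hz => ?_
  obtain ⟨-, hq', hq'', -, hr', hr''⟩ := hqr z hz
  obtain ⟨-, hh₁', -, hh₂'⟩ := hh z hz
  have hweight : Real.exp (-2 * lam * z) ≤ 1 := Real.exp_le_one_iff.2 (by nlinarith [hz.1])
  rw [abs_mul, abs_of_pos (Real.exp_pos _)]
  exact (mul_le_of_le_one_right (abs_nonneg _) hweight).trans
    (hbound k hk q r h₁ h₂ z hq' hq'' hr' hr'' hh₁' hh₂')
end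

section
/- For every Z > 0 and every C > 0 there exist λ₁ ≥ 1 and C₁ > 0, depending only on Z and C, such that for every λ ≥ λ₁ and every twice continuously differentiable function u : [0,Z] → ℝ with u(0) = 0 and u'(0) = 0, one has ∫₀^Z ( (1/2)·u''(z)² − C·u'(z)² ) e^{−2λz} dz ≥ C₁ e^{−2λZ} ∫₀^Z ( u''(z)² + u'(z)² + u(z)² ) dz. -/
/-!
Differentiating `v² e^{-2λz}` and using `v 0 = 0` gives `∫ (2 v v' - 2λ v²) e^{-2λz} ≥ 0`; combined
with `(v' - λ v)² ≥ 0` this yields the Carleman–Hardy inequality `λ² ∫ v² e^{-2λz} ≤ ∫ v'² e^{-2λz}`.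
Applied to `u'` and to `u` with `λ ≥ 1`, it bounds the weighted norms of `u'` and `u` by that of
`u''`, so for `λ² ≥ 4C` the left-hand side is at least a quarter of `∫ u''² e^{-2λz}`, while
`e^{-2λZ} ≤ e^{-2λz}` on `[0, Z]` bounds `e^{-2λZ} ∫ (u''² + u'² + u²)` by three times it; hence
`C₁ = 1/12`.
-/

open Real intervalIntegral

section CarlemanWeight

variable {lam Z : ℝ}

theorem hasDerivAt_sq_mul_exp {v : ℝ → ℝ} {v' z : ℝ} (hv : HasDerivAt v v' z) :
    HasDerivAt (fun z => v z ^ 2 * exp (-2 * lam * z))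
      ((2 * v z * v' - 2 * lam * v z ^ 2) * exp (-2 * lam * z)) z :=
  ((hv.fun_pow 2).fun_mul ((hasDerivAt_id' z).const_mul (-2 * lam)).exp).congr_deriv
    (by push_cast; ring)

theorem sq_mul_integral_sq_mul_exp_le (hlam : 0 ≤ lam) (hZ : 0 ≤ Z) {v : ℝ → ℝ}
    (hv : ContDiff ℝ 1 v) (hv0 : v 0 = 0) :
    lam ^ 2 * ∫ z in (0 : ℝ)..Z, v z ^ 2 * exp (-2 * lam * z) ≤
      ∫ z in (0 : ℝ)..Z, deriv v z ^ 2 * exp (-2 * lam * z) := by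
  have hdiff : Differentiable ℝ v := hv.differentiable one_ne_zero
  have hcont : Continuous (deriv v) := hv.continuous_deriv le_rfl
  have hvcont : Continuous v := hv.continuous
  have boundary : 0 ≤ ∫ z in (0 : ℝ)..Z,
      (2 * v z * deriv v z - 2 * lam * v z ^ 2) * exp (-2 * lam * z) := by
    rw [integral_eq_sub_of_hasDerivAt (fun z _ => hasDerivAt_sq_mul_exp (hdiff z).hasDerivAt)
      (Continuous.intervalIntegrable (by fun_prop) _ _), hv0]
    rw [zero_pow two_ne_zero, zero_mul, sub_zero]
    positivity
  have young : ∫ z in (0 : ℝ)..Z,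
        lam * ((2 * v z * deriv v z - 2 * lam * v z ^ 2) * exp (-2 * lam * z)) ≤
      ∫ z in (0 : ℝ)..Z,
        (deriv v z ^ 2 * exp (-2 * lam * z) - lam ^ 2 * (v z ^ 2 * exp (-2 * lam * z))) :=
    integral_mono_on hZ (Continuous.intervalIntegrable (by fun_prop) _ _)
      (Continuous.intervalIntegrable (by fun_prop) _ _) fun z _ => by
        nlinarith [mul_nonneg (sq_nonneg (deriv v z - lam * v z)) (exp_pos (-2 * lam * z)).le]
  rw [integral_const_mul, integral_sub (Continuous.intervalIntegrable (by fun_prop) _ _)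
    (Continuous.intervalIntegrable (by fun_prop) _ _), integral_const_mul] at young
  nlinarith [mul_nonneg hlam boundary]

theorem exp_mul_integral_le_integral_mul_exp (hlam : 0 ≤ lam) (hZ : 0 ≤ Z) {f : ℝ → ℝ}
    (hf : IntervalIntegrable f MeasureTheory.volume 0 Z) (hf0 : ∀ z ∈ Set.Icc 0 Z, 0 ≤ f z) :
    exp (-2 * lam * Z) * ∫ z in (0 : ℝ)..Z, f z ≤ ∫ z in (0 : ℝ)..Z, f z * exp (-2 * lam * z) := by
  rw [← integral_const_mul]
  refine integral_mono_on hZ (hf.const_mul _)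
    (hf.mul_continuousOn (Continuous.continuousOn (by fun_prop))) fun z hz => ?_
  rw [mul_comm]
  exact mul_le_mul_of_nonneg_left (exp_le_exp.2 (by nlinarith [hz.2])) (hf0 z hz)

theorem exp_mul_integral_add_sq_le (hlam : 0 ≤ lam) (hZ : 0 ≤ Z) {f g h : ℝ → ℝ}
    (hf : Continuous f) (hg : Continuous g) (hh : Continuous h) :
    exp (-2 * lam * Z) * ∫ z in (0 : ℝ)..Z, (f z ^ 2 + g z ^ 2 + h z ^ 2) ≤
      (∫ z in (0 : ℝ)..Z, f z ^ 2 * exp (-2 * lam * z)) +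
        (∫ z in (0 : ℝ)..Z, g z ^ 2 * exp (-2 * lam * z)) +
          ∫ z in (0 : ℝ)..Z, h z ^ 2 * exp (-2 * lam * z) := by
  refine (exp_mul_integral_le_integral_mul_exp hlam hZ
    (Continuous.intervalIntegrable (by fun_prop) _ _) fun z _ => by positivity).trans_eq ?_
  simp_rw [add_mul]
  rw [integral_add (Continuous.intervalIntegrable (by fun_prop) _ _)
    (Continuous.intervalIntegrable (by fun_prop) _ _),
    integral_add (Continuous.intervalIntegrable (by fun_prop) _ _)
    (Continuous.intervalIntegrable (by fun_prop) _ _)]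

end CarlemanWeight

theorem carleman_coercivity_general (Z C : ℝ) (hZ : 0 < Z) :
    ∃ lam₁ C₁ : ℝ, 1 ≤ lam₁ ∧ 0 < C₁ ∧
      ∀ lam : ℝ, lam₁ ≤ lam →
      ∀ u : ℝ → ℝ, ContDiff ℝ 2 u → u 0 = 0 → deriv u 0 = 0 →
      (∫ z in (0:ℝ)..Z,
          ((1/2) * (deriv (deriv u) z) ^ 2 - C * (deriv u z) ^ 2) * Real.exp (-2 * lam * z))
        ≥ C₁ * Real.exp (-2 * lam * Z) *
            ∫ z in (0:ℝ)..Z,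
              ((deriv (deriv u) z) ^ 2 + (deriv u z) ^ 2 + (u z) ^ 2) := by
  refine ⟨max 1 (4 * C), 1 / 12, le_max_left _ _, by norm_num,
    fun lam hlam u hu hu0 hu'0 => ?_⟩
  have hlam1 : 1 ≤ lam := (le_max_left _ _).trans hlam
  have hlamC : 4 * C ≤ lam ^ 2 := by nlinarith [(le_max_right 1 (4 * C)).trans hlam]
  have hu' : ContDiff ℝ 1 (deriv u) := hu.deriv'
  set I2 := ∫ z in (0 : ℝ)..Z, deriv (deriv u) z ^ 2 * exp (-2 * lam * z)
  set I1 := ∫ z in (0 : ℝ)..Z, deriv u z ^ 2 * exp (-2 * lam * z)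
  set I0 := ∫ z in (0 : ℝ)..Z, u z ^ 2 * exp (-2 * lam * z)
  have hI2 : lam ^ 2 * I1 ≤ I2 := sq_mul_integral_sq_mul_exp_le (by linarith) hZ.le hu' hu'0
  have hI1 : lam ^ 2 * I0 ≤ I1 :=
    sq_mul_integral_sq_mul_exp_le (by linarith) hZ.le (hu.of_le one_le_two) hu0
  have hI0 : 0 ≤ I0 := integral_nonneg hZ.le fun z _ => by positivity
  have hLHS : ∫ z in (0 : ℝ)..Z,
      ((1 / 2) * deriv (deriv u) z ^ 2 - C * deriv u z ^ 2) * exp (-2 * lam * z) =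
        1 / 2 * I2 - C * I1 := by
    have hu'' := hu'.continuous_deriv le_rfl
    have hu'c := hu'.continuous
    rw [← integral_const_mul, ← integral_const_mul, ← integral_sub
      (Continuous.intervalIntegrable (by fun_prop) _ _)
      (Continuous.intervalIntegrable (by fun_prop) _ _)]
    congr 1 with z
    ring
  have hRHS := exp_mul_integral_add_sq_le (lam := lam) (by linarith) hZ.le
    (hu'.continuous_deriv le_rfl) hu'.continuous hu.continuous
  have hlam_sq : 1 ≤ lam ^ 2 := one_le_pow₀ hlam1
  have hI1_nonneg : 0 ≤ I1 := (mul_nonneg (by positivity) hI0).trans hI1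
  have absorb : 4 * C * I1 ≤ I2 := (mul_le_mul_of_nonneg_right hlamC hI1_nonneg).trans hI2
  have hI1_le : I1 ≤ I2 := by nlinarith [mul_le_mul_of_nonneg_right hlam_sq hI1_nonneg]
  have hI0_le : I0 ≤ I1 := by nlinarith [mul_le_mul_of_nonneg_right hlam_sq hI0]
  rw [ge_iff_le, hLHS, mul_assoc]
  linarith

/-- Coercivity consequence of the Carleman estimate for `d²/dz²` used in the proof of the
strong convexity inequality: for `λ` large enough the Carleman terms absorb the lower-order
term `−C u'²` and dominate a `λ`-independent `H²`-type norm with weight `e^{−2λZ}`. -/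
theorem carleman_coercivity (Z C : ℝ) (hZ : 0 < Z) (hC : 0 < C) :
    ∃ lam₁ C₁ : ℝ, 1 ≤ lam₁ ∧ 0 < C₁ ∧
      ∀ lam : ℝ, lam₁ ≤ lam →
      ∀ u : ℝ → ℝ, ContDiff ℝ 2 u → u 0 = 0 → deriv u 0 = 0 →
      (∫ z in (0:ℝ)..Z,
          ((1/2) * (deriv (deriv u) z) ^ 2 - C * (deriv u z) ^ 2) * Real.exp (-2 * lam * z))
        ≥ C₁ * Real.exp (-2 * lam * Z) *
            ∫ z in (0:ℝ)..Z,
              ((deriv (deriv u) z) ^ 2 + (deriv u z) ^ 2 + (u z) ^ 2) :=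
  carleman_coercivity_general Z C hZ
end
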